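/- Let p₁ < p₂, ρ > 1, μ ∈ (0,1]. Let I be an open interval containing [p₁,p₂], p₀ ∈ [p₁,p₂], and ψ ∈ C²(I) with ψ'(p) = |p−p₀|^{ρ−1} ψ̃(p) where |ψ̃| is continuous and nonvanishing on I, and ψ' monotone on I ∩ (−∞,p₀] and I ∩ [p₀,∞). Let U(p) = (p−p₁)^{μ−1} ũ(p) with ũ continuous on [p₁,p₂], differentiable on (p₁,p₂), ũ' ∈ L¹(p₁,p₂). Then for all ω > 0, |∫_{p₁}^{p₂} U(p) e^{iωψ(p)} dp| ≤ C ω^{−μ/ρ}, where C = (3/μ)‖ũ‖_{L^∞} + (8‖ũ‖_{L^∞} + 2‖ũ'‖_{L¹}) (min_{[p₁,p₂]} |ψ̃|)^{−1}, and C does not depend on the position of p₀ in [p₁,p₂]. -/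

import Mathlib

/-!
Put `δ = ω^(-1/ρ)`, so that `ω δ^ρ = 1`. On `[p₁, p₁ + δ]` the integral is bounded trivially by
`‖ũ‖_∞ δ^μ / μ`. On the rest of the interval the amplitude is regular: it is bounded by
`δ^(μ-1) ‖ũ‖_∞` and, because `(p - p₁)^(μ-1)` decreases, its total variation is at most
`δ^(μ-1) (‖ũ‖_∞ + ‖ũ'‖_L¹)`. There the window `|p - p₀| < δ` around the stationary point contributes
at most its length times the amplitude, and on either side of it `|ψ'| ≥ m δ^(ρ-1)` with `ψ'`
monotone, so that one integration by parts against `e^(iωψ) / (iωψ')` (the first derivative test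
of van der Corput, with amplitude) gives `(3 sup |U| + var U) / (ω m δ^(ρ-1))`. Every contribution
is a multiple of `δ^μ = ω^(-μ/ρ)`.
-/

open Set MeasureTheory intervalIntegral

theorem IsCompact.le_ciSup_of_continuousOn {β : Type*} [TopologicalSpace β] {f : β → ℝ}
    {s : Set β} {x : β} (hs : IsCompact s) (hf : ContinuousOn f s) (hx : x ∈ s) :
    f x ≤ ⨆ p : s, f p :=
  le_ciSup (image_eq_range f s ▸ hs.bddAbove_image hf) (⟨x, hx⟩ : s)

theorem ContinuousOn.mul_pos_of_forall_ne_zero {f : ℝ → ℝ} {a b : ℝ} (hab : a ≤ b)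
    (hf : ContinuousOn f (Icc a b)) (h0 : ∀ x ∈ Icc a b, f x ≠ 0) : 0 < f a * f b := by
  by_contra! hneg
  have hmem : (0 : ℝ) ∈ uIcc (f a) (f b) := by
    rcases mul_nonpos_iff.1 hneg with ⟨ha, hb⟩ | ⟨ha, hb⟩
    · exact mem_uIcc.2 (Or.inr ⟨hb, ha⟩)
    · exact mem_uIcc.2 (Or.inl ⟨ha, hb⟩)
  rw [← uIcc_of_le hab] at hf h0
  obtain ⟨x, hx, hfx⟩ := intermediate_value_uIcc hf hmem
  exact h0 x hx hfx

theorem abs_inv_sub_inv_le_of_mul_pos {x y c : ℝ} (hc : 0 < c) (hxy : 0 < x * y)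
    (hx : c ≤ |x|) (hy : c ≤ |y|) : |x⁻¹ - y⁻¹| ≤ c⁻¹ := by
  have key : ∀ s t : ℝ, 0 < s → 0 < t → c ≤ s → c ≤ t → |s⁻¹ - t⁻¹| ≤ c⁻¹ :=
    fun s t hs ht hcs hct => abs_sub_le_of_nonneg_of_le (inv_nonneg.2 hs.le)
      (inv_anti₀ hc hcs) (inv_nonneg.2 ht.le) (inv_anti₀ hc hct)
  rcases pos_and_pos_or_neg_and_neg_of_mul_pos hxy with ⟨hx0, hy0⟩ | ⟨hx0, hy0⟩
  · rw [abs_of_pos hx0] at hx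
    rw [abs_of_pos hy0] at hy
    exact key x y hx0 hy0 hx hy
  · rw [abs_of_neg hx0] at hx
    rw [abs_of_neg hy0] at hy
    have := key (-x) (-y) (neg_pos.2 hx0) (neg_pos.2 hy0) hx hy
    rwa [inv_neg, inv_neg, neg_sub_neg, abs_sub_comm] at this

theorem HasDerivAt.nonneg_of_monotoneOn_of_mem_nhds {g : ℝ → ℝ} {g' x : ℝ} {s : Set ℝ}
    (hd : HasDerivAt g g' x) (hg : MonotoneOn g s) (hs : s ∈ nhds x) : 0 ≤ g' :=
  hd.hasDerivWithinAt.nonneg_of_monotoneOn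
    (by simpa using (PerfectSpace.univ_preperfect x (mem_univ x)).nhds_inter hs) hg

theorem HasDerivAt.nonpos_of_antitoneOn_of_mem_nhds {g : ℝ → ℝ} {g' x : ℝ} {s : Set ℝ}
    (hd : HasDerivAt g g' x) (hg : AntitoneOn g s) (hs : s ∈ nhds x) : g' ≤ 0 :=
  neg_nonneg.1 (hd.neg.nonneg_of_monotoneOn_of_mem_nhds hg.neg hs)

theorem ContDiffOn.hasDerivAt_deriv {f : ℝ → ℝ} {s : Set ℝ} {n : WithTop ℕ∞} {x : ℝ}
    (hf : ContDiffOn ℝ n f s) (hs : IsOpen s) (hn : n ≠ 0) (hx : x ∈ s) :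
    HasDerivAt f (deriv f x) x :=
  ((hf.differentiableOn hn x hx).differentiableAt (hs.mem_nhds hx)).hasDerivAt

theorem integral_abs_deriv_eq_abs_sub {f f' : ℝ → ℝ} {a b : ℝ} (hab : a ≤ b)
    (hf : ContinuousOn f (Icc a b)) (hf' : ∀ x ∈ Ioo a b, HasDerivAt f (f' x) x)
    (hint : IntervalIntegrable f' volume a b)
    (hsign : (∀ x ∈ Ioo a b, 0 ≤ f' x) ∨ ∀ x ∈ Ioo a b, f' x ≤ 0) :
    ∫ x in a..b, |f' x| = |f b - f a| := by
  rcases hsign with hpos | hneg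
  · have hFTC := integral_eq_sub_of_hasDerivAt_of_le hab hf
      (fun x hx => (abs_of_nonneg (hpos x hx)).symm ▸ hf' x hx) hint.abs
    rw [hFTC, abs_of_nonneg (hFTC ▸ integral_nonneg hab fun _ _ => abs_nonneg _)]
  · have hFTC := integral_eq_sub_of_hasDerivAt_of_le (f := fun x => -f x) hab hf.neg
      (fun x hx => (abs_of_nonpos (hneg x hx)).symm ▸ (hf' x hx).neg) hint.abs
    rw [neg_sub_neg] at hFTC
    rw [hFTC, abs_sub_comm, abs_of_nonneg (hFTC ▸ integral_nonneg hab fun _ _ => abs_nonneg _)]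

theorem integral_abs_deriv_div_sq_le {φ φ' : ℝ → ℝ} {a b c : ℝ} (hab : a ≤ b) (hc : 0 < c)
    (hφ : ∀ x ∈ Icc a b, HasDerivAt φ (φ' x) x) (hφ' : ContinuousOn φ' (Icc a b))
    (hmono : MonotoneOn φ (Icc a b) ∨ AntitoneOn φ (Icc a b))
    (hcφ : ∀ x ∈ Icc a b, c ≤ |φ x|) :
    ∫ x in a..b, |φ' x| / φ x ^ 2 ≤ c⁻¹ := by
  have hne : ∀ x ∈ Icc a b, φ x ≠ 0 := fun x hx => abs_pos.1 (hc.trans_le (hcφ x hx))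
  have hcont : ContinuousOn φ (Icc a b) := HasDerivAt.continuousOn hφ
  have hsign : (∀ x ∈ Ioo a b, 0 ≤ -φ' x / φ x ^ 2) ∨ ∀ x ∈ Ioo a b, -φ' x / φ x ^ 2 ≤ 0 := by
    have hnhds : ∀ x ∈ Ioo a b, Icc a b ∈ nhds x := fun x hx => Icc_mem_nhds hx.1 hx.2
    refine hmono.symm.imp (fun h x hx => ?_) (fun h x hx => ?_)
    · exact div_nonneg (neg_nonneg.2 <|
        (hφ x (Ioo_subset_Icc_self hx)).nonpos_of_antitoneOn_of_mem_nhds h (hnhds x hx))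
        (sq_nonneg _)
    · exact div_nonpos_of_nonpos_of_nonneg (neg_nonpos.2 <|
        (hφ x (Ioo_subset_Icc_self hx)).nonneg_of_monotoneOn_of_mem_nhds h (hnhds x hx))
        (sq_nonneg _)
  have hvar := integral_abs_deriv_eq_abs_sub hab (hcont.inv₀ hne)
    (fun x hx => (hφ x (Ioo_subset_Icc_self hx)).inv (hne x (Ioo_subset_Icc_self hx)))
    ((hφ'.neg.div (hcont.pow 2) fun x hx => pow_ne_zero 2 (hne x hx)).intervalIntegrable_of_Icc
      hab) hsign
  calc ∫ x in a..b, |φ' x| / φ x ^ 2 = ∫ x in a..b, |-φ' x / φ x ^ 2| := by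
        simp only [abs_div, abs_neg, abs_pow, sq_abs]
    _ = |(φ a)⁻¹ - (φ b)⁻¹| := by rw [hvar, abs_sub_comm, Pi.inv_apply, Pi.inv_apply]
    _ ≤ c⁻¹ := abs_inv_sub_inv_le_of_mul_pos hc (hcont.mul_pos_of_forall_ne_zero hab hne)
        (hcφ a (left_mem_Icc.2 hab)) (hcφ b (right_mem_Icc.2 hab))

theorem norm_integral_mul_deriv_le {A : Type*} [NormedRing A] [NormedAlgebra ℝ A]
    [CompleteSpace A] {a b : ℝ} {u u' v v' : ℝ → A} {G : ℝ → ℝ} (hab : a ≤ b)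
    (hu : ContinuousOn u (Icc a b)) (hv : ContinuousOn v (Icc a b))
    (hu' : ∀ x ∈ Ioo a b, HasDerivAt u (u' x) x) (hv' : ∀ x ∈ Ioo a b, HasDerivAt v (v' x) x)
    (hu'i : IntervalIntegrable u' volume a b) (hv'i : IntervalIntegrable v' volume a b)
    (hv1 : ∀ x ∈ Icc a b, ‖v x‖ ≤ 1) (hG : ∀ x ∈ Icc a b, ‖u' x‖ ≤ G x)
    (hGi : IntervalIntegrable G volume a b) :
    ‖∫ x in a..b, u x * v' x‖ ≤ ‖u a‖ + ‖u b‖ + ∫ x in a..b, G x := by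
  have hab' : Ioo (min a b) (max a b) = Ioo a b := by rw [min_eq_left hab, max_eq_right hab]
  rw [integral_mul_deriv_eq_deriv_mul_of_hasDerivAt (uIcc_of_le hab ▸ hu) (uIcc_of_le hab ▸ hv)
    (hab' ▸ hu') (hab' ▸ hv') hu'i hv'i]
  have hv1' : ∀ w, ∀ x ∈ Icc a b, ‖w * v x‖ ≤ ‖w‖ := fun w x hx =>
    (norm_mul_le _ _).trans (mul_le_of_le_one_right (norm_nonneg _) (hv1 x hx))
  have hint : ‖∫ x in a..b, u' x * v x‖ ≤ ∫ x in a..b, G x :=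
    norm_integral_le_of_norm_le hab (Filter.Eventually.of_forall fun x hx =>
      (hv1' _ x (Ioc_subset_Icc_self hx)).trans (hG x (Ioc_subset_Icc_self hx))) hGi
  linarith [norm_sub_le (u b * v b - u a * v a) (∫ x in a..b, u' x * v x),
    norm_sub_le (u b * v b) (u a * v a), hv1' (u a) a (left_mem_Icc.2 hab),
    hv1' (u b) b (right_mem_Icc.2 hab)]

theorem norm_integral_mul_cexp_le_of_deriv_ne_zero {a b ω : ℝ} {ψ ψ' ψ'' G : ℝ → ℝ}
    {V V' : ℝ → ℂ} (hab : a ≤ b) (hω : 0 < ω)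
    (hψ : ∀ x ∈ Icc a b, HasDerivAt ψ (ψ' x) x) (hψ' : ∀ x ∈ Icc a b, HasDerivAt ψ' (ψ'' x) x)
    (hψ'' : ContinuousOn ψ'' (Icc a b)) (hne : ∀ x ∈ Icc a b, ψ' x ≠ 0)
    (hV : ContinuousOn V (Icc a b)) (hV' : ∀ x ∈ Ioo a b, HasDerivAt V (V' x) x)
    (hV'i : IntervalIntegrable V' volume a b)
    (hG : ∀ x ∈ Icc a b, ‖V' x‖ / (ω * |ψ' x|) + ‖V x‖ * |ψ'' x| / (ω * ψ' x ^ 2) ≤ G x)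
    (hGi : IntervalIntegrable G volume a b) :
    ‖∫ x in a..b, V x * Complex.exp (Complex.I * ω * ψ x)‖ ≤
      ‖V a‖ / (ω * |ψ' a|) + ‖V b‖ / (ω * |ψ' b|) + ∫ x in a..b, G x := by
  set E : ℝ → ℂ := fun x => Complex.exp (Complex.I * ω * ψ x)
  set D : ℝ → ℂ := fun x => Complex.I * ω * ψ' x
  have hE : ∀ x ∈ Icc a b, HasDerivAt E (E x * D x) x := fun x hx =>
    ((hψ x hx).ofReal_comp.const_mul (Complex.I * ω)).cexp
  have hD : ∀ x ∈ Icc a b, HasDerivAt D (Complex.I * ω * ψ'' x) x := fun x hx =>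
    (hψ' x hx).ofReal_comp.const_mul (Complex.I * ω)
  have hD0 : ∀ x ∈ Icc a b, D x ≠ 0 := fun x hx => by simp [D, hω.ne', hne x hx]
  have hnD : ∀ x, ‖D x‖ = ω * |ψ' x| := fun x => by simp [D, abs_of_pos hω]
  set k' : ℝ → ℂ := fun x => -(Complex.I * ω * ψ'' x) / D x ^ 2
  have hnk' : ∀ x, ‖k' x‖ = |ψ'' x| / (ω * ψ' x ^ 2) := fun x => by
    simp only [k', norm_div, norm_neg, norm_mul, norm_pow, hnD, Complex.norm_I,
      Complex.norm_real, Real.norm_eq_abs, abs_of_pos hω, one_mul, mul_pow, sq_abs]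
    field_simp
  have hEc : ContinuousOn E (Icc a b) := HasDerivAt.continuousOn hE
  have hDc : ContinuousOn D (Icc a b) := HasDerivAt.continuousOn hD
  have hk'c : ContinuousOn k' (Icc a b) :=
    (continuousOn_const.mul (Complex.continuous_ofReal.comp_continuousOn hψ'')).neg.div
      (hDc.pow 2) fun x hx => pow_ne_zero 2 (hD0 x hx)
  -- integrate by parts against `E`, writing `V * E = (V / D) * E'`
  have hVE : ∫ x in a..b, V x * E x = ∫ x in a..b, V x * (D x)⁻¹ * (E x * D x) :=
    integral_congr fun x hx => by field_simp [hD0 x (uIcc_of_le hab ▸ hx)]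
  have hIBP := norm_integral_mul_deriv_le (u := fun x => V x * (D x)⁻¹) hab
    (hV.mul (hDc.inv₀ hD0)) hEc
    (fun x hx => (hV' x hx).mul
      ((hD x (Ioo_subset_Icc_self hx)).inv (hD0 x (Ioo_subset_Icc_self hx))))
    (fun x hx => hE x (Ioo_subset_Icc_self hx))
    ((hV'i.mul_continuousOn (uIcc_of_le hab ▸ hDc.inv₀ hD0)).add
      ((hV.mul hk'c).intervalIntegrable_of_Icc hab))
    ((hEc.mul hDc).intervalIntegrable_of_Icc hab) (fun x _ => by simp [E, Complex.norm_exp])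
    (fun x hx => by
      refine (norm_add_le _ _).trans (le_trans (le_of_eq ?_) (hG x hx))
      rw [norm_mul, norm_mul, hnk', norm_inv, hnD]
      ring)
    hGi
  show ‖∫ x in a..b, V x * E x‖ ≤ _
  simpa only [hVE, norm_mul, norm_inv, hnD, div_eq_mul_inv] using hIBP

theorem norm_integral_mul_cexp_le_of_monotoneOn {a b ω c A : ℝ} {ψ ψ' ψ'' : ℝ → ℝ}
    {V V' : ℝ → ℂ} (hab : a ≤ b) (hω : 0 < ω) (hc : 0 < c)
    (hψ : ∀ x ∈ Icc a b, HasDerivAt ψ (ψ' x) x) (hψ' : ∀ x ∈ Icc a b, HasDerivAt ψ' (ψ'' x) x)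
    (hψ'' : ContinuousOn ψ'' (Icc a b))
    (hmono : MonotoneOn ψ' (Icc a b) ∨ AntitoneOn ψ' (Icc a b))
    (hcψ' : ∀ x ∈ Icc a b, c ≤ |ψ' x|) (hV : ContinuousOn V (Icc a b))
    (hV' : ∀ x ∈ Ioo a b, HasDerivAt V (V' x) x) (hV'i : IntervalIntegrable V' volume a b)
    (hA : ∀ x ∈ Icc a b, ‖V x‖ ≤ A) :
    ‖∫ x in a..b, V x * Complex.exp (Complex.I * ω * ψ x)‖ ≤
      (3 * A + ∫ x in a..b, ‖V' x‖) / (ω * c) := by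
  have hne : ∀ x ∈ Icc a b, ψ' x ≠ 0 := fun x hx => abs_pos.1 (hc.trans_le (hcψ' x hx))
  have hωc : 0 < ω * c := mul_pos hω hc
  have hA0 : 0 ≤ A := (norm_nonneg _).trans (hA a (left_mem_Icc.2 hab))
  have hωψ' : ∀ x ∈ Icc a b, ω * c ≤ ω * |ψ' x| := fun x hx =>
    mul_le_mul_of_nonneg_left (hcψ' x hx) hω.le
  have hend : ∀ x ∈ Icc a b, ‖V x‖ / (ω * |ψ' x|) ≤ A / (ω * c) := fun x hx =>
    div_le_div₀ hA0 (hA x hx) hωc (hωψ' x hx)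
  have hrat : IntervalIntegrable (fun x => |ψ'' x| / ψ' x ^ 2) volume a b :=
    (hψ''.abs.div ((HasDerivAt.continuousOn hψ').pow 2) fun x hx =>
      pow_ne_zero 2 (hne x hx)).intervalIntegrable_of_Icc hab
  have hIBP := norm_integral_mul_cexp_le_of_deriv_ne_zero
    (G := fun x => ‖V' x‖ / (ω * c) + A / ω * (|ψ'' x| / ψ' x ^ 2)) hab hω hψ hψ' hψ'' hne hV
    hV' hV'i (fun x hx => add_le_add (div_le_div_of_nonneg_left (norm_nonneg _) hωc (hωψ' x hx))
      (calc ‖V x‖ * |ψ'' x| / (ω * ψ' x ^ 2) = ‖V x‖ * (|ψ'' x| / (ω * ψ' x ^ 2)) :=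
            mul_div_assoc _ _ _
        _ ≤ A * (|ψ'' x| / (ω * ψ' x ^ 2)) := mul_le_mul_of_nonneg_right (hA x hx)
            (div_nonneg (abs_nonneg _) (mul_nonneg hω.le (sq_nonneg _)))
        _ = A / ω * (|ψ'' x| / ψ' x ^ 2) := by ring))
    ((hV'i.norm.div_const _).add (hrat.const_mul _))
  rw [integral_add (hV'i.norm.div_const _) (hrat.const_mul _), intervalIntegral.integral_div,
    intervalIntegral.integral_const_mul] at hIBP
  have hvar : A / ω * ∫ x in a..b, |ψ'' x| / ψ' x ^ 2 ≤ A / (ω * c) := by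
    rw [← div_div]
    exact mul_le_mul_of_nonneg_left (integral_abs_deriv_div_sq_le hab hc hψ' hψ'' hmono hcψ')
      (div_nonneg hA0 hω.le)
  linarith [hend a (left_mem_Icc.2 hab), hend b (right_mem_Icc.2 hab),
    add_div (3 * A) (∫ x in a..b, ‖V' x‖) (ω * c), mul_div_assoc 3 A (ω * c)]

theorem norm_integral_mul_cexp_le_of_monotoneOn_of_subset {a b u v ω c A : ℝ}
    {ψ ψ' ψ'' : ℝ → ℝ} {V V' : ℝ → ℂ} (hau : a ≤ u) (huv : u ≤ v) (hvb : v ≤ b) (hω : 0 < ω)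
    (hc : 0 < c) (hψ : ∀ x ∈ Icc a b, HasDerivAt ψ (ψ' x) x)
    (hψ' : ∀ x ∈ Icc a b, HasDerivAt ψ' (ψ'' x) x) (hψ'' : ContinuousOn ψ'' (Icc a b))
    (hV : ContinuousOn V (Icc a b)) (hV' : ∀ x ∈ Ioo a b, HasDerivAt V (V' x) x)
    (hV'i : IntervalIntegrable V' volume a b) (hA : ∀ x ∈ Icc a b, ‖V x‖ ≤ A)
    (h : u < v → (MonotoneOn ψ' (Icc u v) ∨ AntitoneOn ψ' (Icc u v)) ∧
      ∀ x ∈ Icc u v, c ≤ |ψ' x|) :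
    ‖∫ x in u..v, V x * Complex.exp (Complex.I * ω * ψ x)‖ ≤
      (3 * A + ∫ x in a..b, ‖V' x‖) / (ω * c) := by
  have hA0 : 0 ≤ A := (norm_nonneg _).trans (hA u ⟨hau, huv.trans hvb⟩)
  have hB : ∫ x in u..v, ‖V' x‖ ≤ ∫ x in a..b, ‖V' x‖ :=
    integral_mono_interval hau huv hvb (Filter.Eventually.of_forall fun x => norm_nonneg (V' x))
      hV'i.norm
  rcases huv.eq_or_lt with rfl | hlt
  · rw [integral_same] at hB
    rw [integral_same, norm_zero]
    exact div_nonneg (by linarith) (mul_pos hω hc).le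
  have hsub : Icc u v ⊆ Icc a b := Icc_subset_Icc hau hvb
  refine (norm_integral_mul_cexp_le_of_monotoneOn huv hω hc (fun x hx => hψ x (hsub hx))
    (fun x hx => hψ' x (hsub hx)) (hψ''.mono hsub) (h hlt).1 (h hlt).2 (hV.mono hsub)
    (fun x hx => hV' x (Ioo_subset_Ioo hau hvb hx))
    (hV'i.mono_set (by rw [uIcc_of_le huv, uIcc_of_le (hau.trans (huv.trans hvb))]; exact hsub))
    (fun x hx => hA x (hsub hx))).trans (div_le_div_of_nonneg_right ?_ (mul_pos hω hc).le)
  linarith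

theorem exists_window_subset_Icc {a b p₀ δ : ℝ} (hab : a ≤ b) (hδ : 0 ≤ δ) :
    ∃ s t, a ≤ s ∧ s ≤ t ∧ t ≤ b ∧ t - s ≤ 2 * δ ∧
      (a < s → s ≤ p₀ - δ) ∧ (t < b → p₀ + δ ≤ t) := by
  refine ⟨max a (min b (p₀ - δ)), max (max a (min b (p₀ - δ))) (min b (p₀ + δ)), le_max_left _ _,
    le_max_left _ _, max_le (max_le hab (min_le_left _ _)) (min_le_left _ _), ?_, ?_, ?_⟩
  · rcases max_cases (max a (min b (p₀ - δ))) (min b (p₀ + δ)) with ⟨h, -⟩ | ⟨h, -⟩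
    · linarith
    · rcases min_cases b (p₀ - δ) with ⟨h', -⟩ | ⟨h', -⟩
      · linarith [min_le_left b (p₀ + δ), le_max_right a (min b (p₀ - δ))]
      · linarith [min_le_right b (p₀ + δ), le_max_right a (min b (p₀ - δ))]
  · intro has
    rcases max_cases a (min b (p₀ - δ)) with ⟨h, -⟩ | ⟨h, -⟩
    · linarith
    · linarith [min_le_right b (p₀ - δ)]
  · intro htb
    rcases min_cases b (p₀ + δ) with ⟨h, -⟩ | ⟨h, -⟩
    · linarith [le_max_right (max a (min b (p₀ - δ))) (min b (p₀ + δ))]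
    · linarith [le_max_right (max a (min b (p₀ - δ))) (min b (p₀ + δ))]

theorem norm_integral_mul_cexp_le_of_stationary {a b p₀ ω δ c A : ℝ} {ψ ψ' ψ'' : ℝ → ℝ}
    {V V' : ℝ → ℂ} (hab : a ≤ b) (hω : 0 < ω) (hδ : 0 ≤ δ) (hc : 0 < c)
    (hψ : ∀ x ∈ Icc a b, HasDerivAt ψ (ψ' x) x) (hψ' : ∀ x ∈ Icc a b, HasDerivAt ψ' (ψ'' x) x)
    (hψ'' : ContinuousOn ψ'' (Icc a b))
    (hmono₁ : MonotoneOn ψ' (Icc a b ∩ Iic p₀) ∨ AntitoneOn ψ' (Icc a b ∩ Iic p₀))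
    (hmono₂ : MonotoneOn ψ' (Icc a b ∩ Ici p₀) ∨ AntitoneOn ψ' (Icc a b ∩ Ici p₀))
    (hcψ' : ∀ x ∈ Icc a b, δ ≤ |x - p₀| → c ≤ |ψ' x|) (hV : ContinuousOn V (Icc a b))
    (hV' : ∀ x ∈ Ioo a b, HasDerivAt V (V' x) x) (hV'i : IntervalIntegrable V' volume a b)
    (hA : ∀ x ∈ Icc a b, ‖V x‖ ≤ A) :
    ‖∫ x in a..b, V x * Complex.exp (Complex.I * ω * ψ x)‖ ≤
      2 * δ * A + 2 * ((3 * A + ∫ x in a..b, ‖V' x‖) / (ω * c)) := by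
  set E : ℝ → ℂ := fun x => Complex.exp (Complex.I * ω * ψ x)
  obtain ⟨s, t, has, hst, htb, hts, hs, ht⟩ := exists_window_subset_Icc (p₀ := p₀) hab hδ
  have hsub : ∀ {u v}, a ≤ u → v ≤ b → Icc u v ⊆ Icc a b := Icc_subset_Icc
  have hL := norm_integral_mul_cexp_le_of_monotoneOn_of_subset le_rfl has (hst.trans htb) hω hc
    hψ hψ' hψ'' hV hV' hV'i hA fun h =>
      have hleft : Icc a s ⊆ Icc a b ∩ Iic p₀ := fun x hx =>
        ⟨hsub le_rfl (hst.trans htb) hx, mem_Iic.2 (by linarith [hx.2, hs h])⟩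
      ⟨hmono₁.imp (·.mono hleft) (·.mono hleft), fun x hx =>
        hcψ' x (hleft hx).1 (le_abs.2 (Or.inr (by linarith [hx.2, hs h])))⟩
  have hR := norm_integral_mul_cexp_le_of_monotoneOn_of_subset (has.trans hst) htb le_rfl hω hc
    hψ hψ' hψ'' hV hV' hV'i hA fun h =>
      have hright : Icc t b ⊆ Icc a b ∩ Ici p₀ := fun x hx =>
        ⟨hsub (has.trans hst) le_rfl hx, mem_Ici.2 (by linarith [hx.1, ht h])⟩
      ⟨hmono₂.imp (·.mono hright) (·.mono hright), fun x hx =>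
        hcψ' x (hright hx).1 (le_abs.2 (Or.inl (by linarith [hx.1, ht h])))⟩
  have hM : ‖∫ x in s..t, V x * E x‖ ≤ A * |t - s| :=
    norm_integral_le_of_norm_le_const fun x hx => by
      rw [uIoc_of_le hst] at hx
      simpa [E, Complex.norm_exp] using hA x ⟨has.trans hx.1.le, hx.2.trans htb⟩
  have hVEi : ∀ {u v}, a ≤ u → u ≤ v → v ≤ b → IntervalIntegrable (fun x => V x * E x) volume u v :=
    fun hau huv hvb => ((hV.mono (hsub hau hvb)).mul (Complex.continuous_exp.comp_continuousOn
      (continuousOn_const.mul (Complex.continuous_ofReal.comp_continuousOn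
        ((HasDerivAt.continuousOn hψ).mono (hsub hau hvb)))))).intervalIntegrable_of_Icc huv
  rw [← integral_add_adjacent_intervals (hVEi le_rfl (has.trans hst) htb)
      (hVEi (has.trans hst) htb le_rfl),
    ← integral_add_adjacent_intervals (hVEi le_rfl has (hst.trans htb)) (hVEi has hst htb)]
  rw [abs_of_nonneg (sub_nonneg.2 hst)] at hM
  linarith [mul_le_mul_of_nonneg_left hts ((norm_nonneg _).trans (hA a (left_mem_Icc.2 hab))),
    norm_add₃_le (a := ∫ x in a..s, V x * E x) (b := ∫ x in s..t, V x * E x)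
      (c := ∫ x in t..b, V x * E x)]

theorem integral_norm_deriv_ofReal_mul_le {a b M : ℝ} {r r' : ℝ → ℝ} {u u' : ℝ → ℂ}
    (hab : a ≤ b) (hr : ∀ x ∈ Icc a b, HasDerivAt r (r' x) x) (hr' : ContinuousOn r' (Icc a b))
    (hanti : AntitoneOn r (Icc a b)) (hrb : 0 ≤ r b) (hu'i : IntervalIntegrable u' volume a b)
    (hi : IntervalIntegrable (fun x => (r' x : ℂ) * u x + r x * u' x) volume a b)
    (hM : ∀ x ∈ Icc a b, ‖u x‖ ≤ M) :
    ∫ x in a..b, ‖(r' x : ℂ) * u x + r x * u' x‖ ≤ r a * (M + ∫ x in a..b, ‖u' x‖) := by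
  have ha : a ∈ Icc a b := left_mem_Icc.2 hab
  have hb : b ∈ Icc a b := right_mem_Icc.2 hab
  have hM0 : 0 ≤ M := (norm_nonneg _).trans (hM a ha)
  have hvar : ∫ x in a..b, |r' x| = |r b - r a| :=
    integral_abs_deriv_eq_abs_sub hab (HasDerivAt.continuousOn hr)
      (fun x hx => hr x (Ioo_subset_Icc_self hx)) (hr'.intervalIntegrable_of_Icc hab)
      (Or.inr fun x hx => (hr x (Ioo_subset_Icc_self hx)).nonpos_of_antitoneOn_of_mem_nhds hanti
        (Icc_mem_nhds hx.1 hx.2))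
  rw [abs_of_nonpos (sub_nonpos.2 (hanti ha hb hab))] at hvar
  have hbound : ∀ x ∈ Icc a b, ‖(r' x : ℂ) * u x + r x * u' x‖ ≤ |r' x| * M + r a * ‖u' x‖ :=
    fun x hx => by
      refine (norm_add_le _ _).trans (add_le_add ?_ ?_) <;>
        rw [norm_mul, Complex.norm_real, Real.norm_eq_abs]
      · exact mul_le_mul_of_nonneg_left (hM x hx) (abs_nonneg _)
      · rw [abs_of_nonneg (hrb.trans (hanti hx hb hx.2))]
        exact mul_le_mul_of_nonneg_right (hanti ha hx hx.1) (norm_nonneg _)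
  have hRi : IntervalIntegrable (fun x => |r' x| * M + r a * ‖u' x‖) volume a b :=
    (hr'.abs.intervalIntegrable_of_Icc hab |>.mul_const M).add (hu'i.norm.const_mul (r a))
  refine (integral_mono_on hab hi.norm hRi hbound).trans ?_
  rw [integral_add (hr'.abs.intervalIntegrable_of_Icc hab |>.mul_const M)
    (hu'i.norm.const_mul (r a)), intervalIntegral.integral_mul_const,
    intervalIntegral.integral_const_mul, hvar]
  linarith [mul_nonneg hrb hM0]

theorem norm_integral_ofReal_mul_mul_cexp_le_of_stationary {a b p₀ ω δ c M N : ℝ}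
    {ψ ψ' ψ'' r r' : ℝ → ℝ} {u u' : ℝ → ℂ} (hab : a ≤ b) (hω : 0 < ω) (hδ : 0 ≤ δ) (hc : 0 < c)
    (hψ : ∀ x ∈ Icc a b, HasDerivAt ψ (ψ' x) x) (hψ' : ∀ x ∈ Icc a b, HasDerivAt ψ' (ψ'' x) x)
    (hψ'' : ContinuousOn ψ'' (Icc a b))
    (hmono₁ : MonotoneOn ψ' (Icc a b ∩ Iic p₀) ∨ AntitoneOn ψ' (Icc a b ∩ Iic p₀))
    (hmono₂ : MonotoneOn ψ' (Icc a b ∩ Ici p₀) ∨ AntitoneOn ψ' (Icc a b ∩ Ici p₀))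
    (hcψ' : ∀ x ∈ Icc a b, δ ≤ |x - p₀| → c ≤ |ψ' x|)
    (hr : ∀ x ∈ Icc a b, HasDerivAt r (r' x) x) (hr' : ContinuousOn r' (Icc a b))
    (hanti : AntitoneOn r (Icc a b)) (hrb : 0 ≤ r b) (hu : ContinuousOn u (Icc a b))
    (hu' : ∀ x ∈ Ioo a b, HasDerivAt u (u' x) x) (hu'i : IntervalIntegrable u' volume a b)
    (hM : ∀ x ∈ Icc a b, ‖u x‖ ≤ M) (hN : ∫ x in a..b, ‖u' x‖ ≤ N) :
    ‖∫ x in a..b, (r x : ℂ) * u x * Complex.exp (Complex.I * ω * ψ x)‖ ≤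
      r a * (2 * δ * M + 2 * ((4 * M + N) / (ω * c))) := by
  have ha : a ∈ Icc a b := left_mem_Icc.2 hab
  have hb : b ∈ Icc a b := right_mem_Icc.2 hab
  have hrc : ContinuousOn (fun x => (r x : ℂ)) (Icc a b) :=
    Complex.continuous_ofReal.comp_continuousOn (HasDerivAt.continuousOn hr)
  have hV'i : IntervalIntegrable (fun x => (r' x : ℂ) * u x + r x * u' x) volume a b :=
    (((Complex.continuous_ofReal.comp_continuousOn hr').mul hu).intervalIntegrable_of_Icc
      hab).add (hu'i.continuousOn_mul (uIcc_of_le hab ▸ hrc))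
  have hA : ∀ x ∈ Icc a b, ‖(r x : ℂ) * u x‖ ≤ r a * M := fun x hx => by
    rw [norm_mul, Complex.norm_real, Real.norm_eq_abs,
      abs_of_nonneg (hrb.trans (hanti hx hb hx.2))]
    exact mul_le_mul (hanti ha hx hx.1) (hM x hx) (norm_nonneg _) (hrb.trans (hanti ha hb hab))
  have hvar := integral_norm_deriv_ofReal_mul_le hab hr hr' hanti hrb hu'i hV'i hM
  refine (norm_integral_mul_cexp_le_of_stationary hab hω hδ hc hψ hψ' hψ'' hmono₁ hmono₂ hcψ'
    (hrc.mul hu) (fun x hx => (hr x (Ioo_subset_Icc_self hx)).ofReal_comp.mul (hu' x hx))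
    hV'i hA).trans ?_
  have hra : 0 ≤ r a := hrb.trans (hanti ha hb hab)
  calc _ ≤ 2 * δ * (r a * M) + 2 * (r a * (4 * M + N) / (ω * c)) := by
        gcongr
        linarith [mul_le_mul_of_nonneg_left hN hra]
    _ = _ := by ring

theorem continuousOn_ofReal_sub_rpow_mul {p₁ r : ℝ} {u : ℝ → ℂ} {s : Set ℝ}
    (hu : ContinuousOn u s) (hs : s ⊆ Ioi p₁) :
    ContinuousOn (fun x => (((x - p₁) ^ r : ℝ) : ℂ) * u x) s :=
  (Complex.continuous_ofReal.comp_continuousOn ((continuousOn_id.sub continuousOn_const).rpow_const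
    fun _ hx => Or.inl (sub_ne_zero.2 (hs hx).ne'))).mul hu

theorem intervalIntegrable_sub_rpow {p₁ q r : ℝ} (hr : -1 < r) :
    IntervalIntegrable (fun x => (x - p₁) ^ r) volume p₁ q := by
  simpa using (intervalIntegrable_rpow' hr (a := 0) (b := q - p₁)).comp_sub_right p₁

theorem intervalIntegrable_of_norm_le_sub_rpow {E : Type*} [NormedAddCommGroup E]
    {p₁ q μ M : ℝ} {g : ℝ → E} (hq : p₁ ≤ q) (hμ : 0 < μ) (hgc : ContinuousOn g (Ioc p₁ q))
    (hg : ∀ x ∈ Ioc p₁ q, ‖g x‖ ≤ M * (x - p₁) ^ (μ - 1)) :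
    IntervalIntegrable g volume p₁ q :=
  ((intervalIntegrable_sub_rpow (by linarith)).const_mul M).mono_fun'
    (uIoc_of_le hq ▸ hgc.aestronglyMeasurable measurableSet_Ioc)
    ((ae_restrict_iff' measurableSet_uIoc).2 (Filter.Eventually.of_forall
      fun x hx => hg x (uIoc_of_le hq ▸ hx)))

theorem norm_integral_le_of_norm_le_sub_rpow {E : Type*} [NormedAddCommGroup E]
    [NormedSpace ℝ E] {p₁ q μ M : ℝ} {g : ℝ → E} (hq : p₁ ≤ q) (hμ : 0 < μ)
    (hg : ∀ x ∈ Ioc p₁ q, ‖g x‖ ≤ M * (x - p₁) ^ (μ - 1)) :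
    ‖∫ x in p₁..q, g x‖ ≤ M * (q - p₁) ^ μ / μ := by
  refine (norm_integral_le_of_norm_le hq (Filter.Eventually.of_forall hg)
    ((intervalIntegrable_sub_rpow (by linarith)).const_mul M)).trans (le_of_eq ?_)
  rw [intervalIntegral.integral_const_mul, integral_comp_sub_right (fun x => x ^ (μ - 1)),
    sub_self, integral_rpow (Or.inl (by linarith)), sub_add_cancel, Real.zero_rpow hμ.ne',
    sub_zero, mul_div_assoc]

theorem norm_integral_sub_rpow_mul_cexp_le {p₁ p₀ a b ρ μ ω δ m M N : ℝ} {I : Set ℝ}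
    {ψ ψt : ℝ → ℝ} {u : ℝ → ℂ} (hpa : p₁ < a) (hab : a ≤ b) (hρ : 1 ≤ ρ) (hμ : μ ≤ 1)
    (hω : 0 < ω) (hδ : 0 < δ) (hm : 0 < m) (hI : IsOpen I) (habI : Icc a b ⊆ I)
    (hψ : ContDiffOn ℝ 2 ψ I) (hfact : ∀ p ∈ I, deriv ψ p = |p - p₀| ^ (ρ - 1) * ψt p)
    (hmono₁ : MonotoneOn (deriv ψ) (Icc a b ∩ Iic p₀) ∨ AntitoneOn (deriv ψ) (Icc a b ∩ Iic p₀))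
    (hmono₂ : MonotoneOn (deriv ψ) (Icc a b ∩ Ici p₀) ∨ AntitoneOn (deriv ψ) (Icc a b ∩ Ici p₀))
    (hψt : ∀ p ∈ Icc a b, m ≤ |ψt p|) (hu : ContinuousOn u (Icc a b))
    (hdiff : ∀ p ∈ Ioo a b, DifferentiableAt ℝ u p)
    (hint : IntervalIntegrable (fun p => ‖deriv u p‖) volume a b)
    (hM : ∀ p ∈ Icc a b, ‖u p‖ ≤ M) (hN : ∫ p in a..b, ‖deriv u p‖ ≤ N) :
    ‖∫ p in a..b, (((p - p₁) ^ (μ - 1) : ℝ) : ℂ) * u p * Complex.exp (Complex.I * ω * ψ p)‖ ≤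
      (a - p₁) ^ (μ - 1) * (2 * δ * M + 2 * ((4 * M + N) / (ω * (m * δ ^ (ρ - 1))))) := by
  have hψ1 : ContDiffOn ℝ 1 (deriv ψ) I := hψ.deriv_of_isOpen hI (by norm_num)
  have hsub : Icc a b ⊆ Ioi p₁ := fun x hx => hpa.trans_le hx.1
  refine norm_integral_ofReal_mul_mul_cexp_le_of_stationary (r := fun x => (x - p₁) ^ (μ - 1))
    hab hω hδ.le (mul_pos hm (Real.rpow_pos_of_pos hδ _))
    (fun x hx => hψ.hasDerivAt_deriv hI (by norm_num) (habI hx))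
    (fun x hx => hψ1.hasDerivAt_deriv hI one_ne_zero (habI hx))
    ((hψ1.continuousOn_deriv_of_isOpen hI le_rfl).mono habI) hmono₁ hmono₂ ?_
    (fun x hx => ((hasDerivAt_id x).sub_const p₁).rpow_const
      (Or.inl (sub_ne_zero.2 (hsub hx).ne')))
    (continuousOn_const.mul ((continuousOn_id.sub continuousOn_const).rpow_const
      fun x hx => Or.inl (sub_ne_zero.2 (hsub hx).ne')))
    (fun x hx y _ hxy => Real.rpow_le_rpow_of_nonpos (sub_pos.2 (hsub hx))
      (sub_le_sub_right hxy _) (by linarith))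
    (Real.rpow_nonneg (sub_pos.2 (hsub (right_mem_Icc.2 hab))).le _) hu
    (fun x hx => (hdiff x hx).hasDerivAt)
    (hint.mono_fun' (measurable_deriv u).aestronglyMeasurable.restrict
      (Filter.Eventually.of_forall fun _ => le_rfl)) hM hN
  intro x hx hδx
  rw [hfact x (habI hx), abs_mul, abs_of_nonneg (Real.rpow_nonneg (abs_nonneg _) _), mul_comm]
  exact mul_le_mul (Real.rpow_le_rpow hδ.le hδx (by linarith)) (hψt x hx) hm.le
    (Real.rpow_nonneg (abs_nonneg _) _)

theorem norm_integral_sub_rpow_mul_cexp_le_add {p₁ p₂ p₀ ρ μ ω δ m M : ℝ} {I : Set ℝ}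
    {ψ ψt : ℝ → ℝ} {u : ℝ → ℂ} (hp : p₁ ≤ p₂) (hρ : 1 ≤ ρ) (hμ0 : 0 < μ) (hμ1 : μ ≤ 1)
    (hω : 0 < ω) (hδ : 0 < δ) (hm : 0 < m) (hI : IsOpen I) (hIsub : Icc p₁ p₂ ⊆ I)
    (hψ : ContDiffOn ℝ 2 ψ I) (hfact : ∀ p ∈ I, deriv ψ p = |p - p₀| ^ (ρ - 1) * ψt p)
    (hmono₁ : MonotoneOn (deriv ψ) (Icc p₁ p₂ ∩ Iic p₀) ∨
      AntitoneOn (deriv ψ) (Icc p₁ p₂ ∩ Iic p₀))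
    (hmono₂ : MonotoneOn (deriv ψ) (Icc p₁ p₂ ∩ Ici p₀) ∨
      AntitoneOn (deriv ψ) (Icc p₁ p₂ ∩ Ici p₀))
    (hψt : ∀ p ∈ Icc p₁ p₂, m ≤ |ψt p|) (hu : ContinuousOn u (Icc p₁ p₂))
    (hdiff : ∀ p ∈ Ioo p₁ p₂, DifferentiableAt ℝ u p)
    (hint : IntervalIntegrable (fun p => ‖deriv u p‖) volume p₁ p₂)
    (hM : ∀ p ∈ Icc p₁ p₂, ‖u p‖ ≤ M) :
    ‖∫ p in p₁..p₂, (((p - p₁) ^ (μ - 1) : ℝ) : ℂ) * u p * Complex.exp (Complex.I * ω * ψ p)‖ ≤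
      M * δ ^ μ / μ + δ ^ (μ - 1) * (2 * δ * M +
        2 * ((4 * M + ∫ p in p₁..p₂, ‖deriv u p‖) / (ω * (m * δ ^ (ρ - 1))))) := by
  set F : ℝ → ℂ := fun p =>
    (((p - p₁) ^ (μ - 1) : ℝ) : ℂ) * u p * Complex.exp (Complex.I * ω * ψ p)
  have hF : ∀ x ∈ Ioc p₁ p₂, ‖F x‖ ≤ M * (x - p₁) ^ (μ - 1) := fun x hx => by
    have hr : 0 ≤ (x - p₁) ^ (μ - 1) := Real.rpow_nonneg (sub_pos.2 hx.1).le _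
    simp only [F, norm_mul, Complex.norm_exp, Complex.norm_real, Real.norm_eq_abs, abs_of_nonneg hr]
    simpa [mul_comm] using mul_le_mul_of_nonneg_left (hM x (Ioc_subset_Icc_self hx)) hr
  have hM0 : 0 ≤ M := (norm_nonneg _).trans (hM p₁ (left_mem_Icc.2 hp))
  have hN0 : 0 ≤ ∫ p in p₁..p₂, ‖deriv u p‖ := integral_nonneg hp fun _ _ => norm_nonneg _
  rcases le_or_gt p₂ (p₁ + δ) with h | h
  · have hnear : M * (p₂ - p₁) ^ μ / μ ≤ M * δ ^ μ / μ := by gcongr; linarith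
    have hfar : 0 ≤ δ ^ (μ - 1) * (2 * δ * M +
        2 * ((4 * M + ∫ p in p₁..p₂, ‖deriv u p‖) / (ω * (m * δ ^ (ρ - 1))))) := by positivity
    linarith [norm_integral_le_of_norm_le_sub_rpow hp hμ0 hF]
  have hsub : Icc (p₁ + δ) p₂ ⊆ Icc p₁ p₂ := Icc_subset_Icc (by linarith) le_rfl
  have hsubJ : ∀ J, Icc (p₁ + δ) p₂ ∩ J ⊆ Icc p₁ p₂ ∩ J := fun J => inter_subset_inter_left J hsub
  have hnear := norm_integral_le_of_norm_le_sub_rpow (q := p₁ + δ) (by linarith) hμ0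
    fun x hx => hF x ⟨hx.1, hx.2.trans h.le⟩
  have hfar := norm_integral_sub_rpow_mul_cexp_le (p₁ := p₁) (by linarith) h.le hρ hμ1 hω hδ hm
    hI (hsub.trans hIsub) hψ hfact (hmono₁.imp (·.mono (hsubJ _)) (·.mono (hsubJ _)))
    (hmono₂.imp (·.mono (hsubJ _)) (·.mono (hsubJ _))) (fun x hx => hψt x (hsub hx))
    (hu.mono hsub) (fun x hx => hdiff x (Ioo_subset_Ioo (by linarith) le_rfl hx))
    (hint.mono_set (by rw [uIcc_of_le h.le, uIcc_of_le hp]; exact hsub))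
    (fun x hx => hM x (hsub hx))
    (integral_mono_interval (by linarith) h.le le_rfl
      (Filter.Eventually.of_forall fun _ => norm_nonneg _) hint)
  rw [add_sub_cancel_left] at hnear hfar
  have hFi : IntervalIntegrable F volume p₁ p₂ :=
    intervalIntegrable_of_norm_le_sub_rpow hp hμ0
      ((continuousOn_ofReal_sub_rpow_mul (hu.mono Ioc_subset_Icc_self) fun _ hx => hx.1).mul
        (Complex.continuous_exp.comp_continuousOn (continuousOn_const.mul
          (Complex.continuous_ofReal.comp_continuousOn (hψ.continuousOn.mono
            (Ioc_subset_Icc_self.trans hIsub)))))) hF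
  rw [← integral_add_adjacent_intervals (b := p₁ + δ)
    (hFi.mono_set (by
      rw [uIcc_of_le (by linarith), uIcc_of_le hp]; exact Icc_subset_Icc le_rfl h.le))
    (hFi.mono_set (by rw [uIcc_of_le h.le, uIcc_of_le hp]; exact hsub))]
  exact (norm_add_le _ _).trans (add_le_add hnear hfar)

theorem add_le_mul_rpow_of_mul_rpow_eq_one {ω δ ρ μ m M N : ℝ} (hδ : 0 < δ)
    (hωδ : ω * δ ^ ρ = 1) (hμ0 : 0 < μ) (hμ1 : μ ≤ 1) (hm : 0 < m) (hM : 0 ≤ M) :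
    M * δ ^ μ / μ + δ ^ (μ - 1) * (2 * δ * M + 2 * ((4 * M + N) / (ω * (m * δ ^ (ρ - 1))))) ≤
      (3 / μ * M + (8 * M + 2 * N) * m⁻¹) * δ ^ μ := by
  have hfar : δ ^ (μ - 1) * (2 * δ * M + 2 * ((4 * M + N) / (ω * (m * δ ^ (ρ - 1))))) =
      δ ^ μ * (2 * M + (8 * M + 2 * N) * m⁻¹) := by
    rw [Real.rpow_sub_one hδ.ne', Real.rpow_sub_one hδ.ne', eq_inv_of_mul_eq_one_left hωδ]
    field_simp
    ring
  have hμM : δ ^ μ * (2 * M) ≤ δ ^ μ * (2 / μ * M) :=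
    mul_le_mul_of_nonneg_left (mul_le_mul_of_nonneg_right
      ((le_div_iff₀ hμ0).2 (by linarith)) hM) (Real.rpow_nonneg hδ.le _)
  rw [hfar]
  simp only [div_eq_mul_inv] at hμM ⊢
  linarith

theorem vdc_stationary_inside_general
    (p₁ p₂ : ℝ) (hp : p₁ < p₂) (ρ μ : ℝ) (hρ : 1 < ρ) (hμ : μ ∈ Set.Ioc (0:ℝ) 1)
    (I : Set ℝ) (hIopen : IsOpen I) (hIsub : Set.Icc p₁ p₂ ⊆ I)
    (p₀ : ℝ)
    (ψ : ℝ → ℝ) (ψt : ℝ → ℝ)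
    (hψ : ContDiffOn ℝ 2 ψ I)
    (hfact : ∀ p ∈ I, deriv ψ p = |p - p₀| ^ (ρ - 1) * ψt p)
    (hmono₁ : MonotoneOn (deriv ψ) (I ∩ Set.Iic p₀) ∨
      AntitoneOn (deriv ψ) (I ∩ Set.Iic p₀))
    (hmono₂ : MonotoneOn (deriv ψ) (I ∩ Set.Ici p₀) ∨
      AntitoneOn (deriv ψ) (I ∩ Set.Ici p₀))
    (m : ℝ) (hm : 0 < m)
    (hmin : IsLeast ((fun p => |ψt p|) '' Set.Icc p₁ p₂) m)
    (ut : ℝ → ℂ)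
    (hcont : ContinuousOn ut (Set.Icc p₁ p₂))
    (hdiff : ∀ p ∈ Set.Ioo p₁ p₂, DifferentiableAt ℝ ut p)
    (hint : IntervalIntegrable (fun p => ‖deriv ut p‖) MeasureTheory.volume p₁ p₂)
    (U : ℝ → ℂ)
    (hU : ∀ p ∈ Set.Ioc p₁ p₂, U p = (((p - p₁) ^ (μ - 1) : ℝ) : ℂ) * ut p) :
    ∀ ω : ℝ, 0 < ω →
      ‖∫ p in p₁..p₂, U p * Complex.exp (Complex.I * ω * ψ p)‖ ≤
        ((3 / μ) * (⨆ p : Set.Icc p₁ p₂, ‖ut (p : ℝ)‖) +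
          (8 * (⨆ p : Set.Icc p₁ p₂, ‖ut (p : ℝ)‖) +
            2 * ∫ p in p₁..p₂, ‖deriv ut p‖) * m⁻¹) * ω ^ (-(μ / ρ)) := by
  intro ω hω
  obtain ⟨hμ0, hμ1⟩ := hμ
  have hM : ∀ p ∈ Icc p₁ p₂, ‖ut p‖ ≤ ⨆ p : Icc p₁ p₂, ‖ut (p : ℝ)‖ := fun p hp =>
    isCompact_Icc.le_ciSup_of_continuousOn hcont.norm hp
  set δ := ω ^ (-ρ⁻¹)
  have hδ : 0 < δ := Real.rpow_pos_of_pos hω _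
  have hωδ : ω * δ ^ ρ = 1 := by
    rw [← Real.rpow_mul hω.le, neg_mul, inv_mul_cancel₀ (by linarith), Real.rpow_neg_one,
      mul_inv_cancel₀ hω.ne']
  have hδμ : δ ^ μ = ω ^ (-(μ / ρ)) := by rw [← Real.rpow_mul hω.le, neg_mul, inv_mul_eq_div]
  have hUV : ∫ p in p₁..p₂, U p * Complex.exp (Complex.I * ω * ψ p) = ∫ p in p₁..p₂,
      (((p - p₁) ^ (μ - 1) : ℝ) : ℂ) * ut p * Complex.exp (Complex.I * ω * ψ p) :=
    integral_congr_ae (Filter.Eventually.of_forall fun x hx => by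
      rw [hU x (uIoc_of_le hp.le ▸ hx)])
  have hsubJ : ∀ J, Icc p₁ p₂ ∩ J ⊆ I ∩ J := fun J => inter_subset_inter_left J hIsub
  rw [hUV, ← hδμ]
  exact (norm_integral_sub_rpow_mul_cexp_le_add hp.le hρ.le hμ0 hμ1 hω hδ hm hIopen hIsub hψ
    hfact (hmono₁.imp (·.mono (hsubJ _)) (·.mono (hsubJ _)))
    (hmono₂.imp (·.mono (hsubJ _)) (·.mono (hsubJ _))) (fun p hp => hmin.2 ⟨p, hp, rfl⟩) hcont
    hdiff hint hM).trans (add_le_mul_rpow_of_mul_rpow_eq_one hδ hωδ hμ0 hμ1 hm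
      ((norm_nonneg _).trans (hM p₁ (left_mem_Icc.2 hp.le))))

theorem vdc_stationary_inside
    (p₁ p₂ : ℝ) (hp : p₁ < p₂) (ρ μ : ℝ) (hρ : 1 < ρ) (hμ : μ ∈ Set.Ioc (0:ℝ) 1)
    (I : Set ℝ) (hIopen : IsOpen I) (hIsub : Set.Icc p₁ p₂ ⊆ I)
    (p₀ : ℝ) (hp₀ : p₀ ∈ Set.Icc p₁ p₂)
    (ψ : ℝ → ℝ) (ψt : ℝ → ℝ)
    (hψ : ContDiffOn ℝ 2 ψ I)
    (hfact : ∀ p ∈ I, deriv ψ p = |p - p₀| ^ (ρ - 1) * ψt p)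
    (hψtcont : ContinuousOn (fun p => |ψt p|) I)
    (hψtne : ∀ p ∈ I, ψt p ≠ 0)
    (hmono₁ : MonotoneOn (deriv ψ) (I ∩ Set.Iic p₀) ∨
      AntitoneOn (deriv ψ) (I ∩ Set.Iic p₀))
    (hmono₂ : MonotoneOn (deriv ψ) (I ∩ Set.Ici p₀) ∨
      AntitoneOn (deriv ψ) (I ∩ Set.Ici p₀))
    (m : ℝ) (hm : 0 < m)
    (hmin : IsLeast ((fun p => |ψt p|) '' Set.Icc p₁ p₂) m)
    (ut : ℝ → ℂ)
    (hcont : ContinuousOn ut (Set.Icc p₁ p₂))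
    (hdiff : ∀ p ∈ Set.Ioo p₁ p₂, DifferentiableAt ℝ ut p)
    (hint : IntervalIntegrable (fun p => ‖deriv ut p‖) MeasureTheory.volume p₁ p₂)
    (U : ℝ → ℂ)
    (hU : ∀ p ∈ Set.Ioc p₁ p₂, U p = (((p - p₁) ^ (μ - 1) : ℝ) : ℂ) * ut p) :
    ∀ ω : ℝ, 0 < ω →
      ‖∫ p in p₁..p₂, U p * Complex.exp (Complex.I * ω * ψ p)‖ ≤
        ((3 / μ) * (⨆ p : Set.Icc p₁ p₂, ‖ut (p : ℝ)‖) +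
          (8 * (⨆ p : Set.Icc p₁ p₂, ‖ut (p : ℝ)‖) +
            2 * ∫ p in p₁..p₂, ‖deriv ut p‖) * m⁻¹) * ω ^ (-(μ / ρ)) :=
  vdc_stationary_inside_general p₁ p₂ hp ρ μ hρ hμ I hIopen hIsub p₀ ψ ψt hψ hfact hmono₁ hmono₂ m
    hm hmin ut hcont hdiff hint U hU
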